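/- arXiv:2511.18188 — 3 statements merged into one kernel-verified Lean document; each statement's English description precedes it below -/
import Mathlib

section
/- If $(a_k)_{k\geq 1}$ is a complex sequence with $\sum_{k\geq 1}|a_k| < \infty$ and $\sum_{k\geq 1} a_{nk} = 0$ for every $n \geq 1$, then $a_j = 0$ for all $j \geq 1$. -/
open Nat ArithmeticFunction Finset Filter Topology
open scoped ArithmeticFunction.zeta

private lemma haar_summable_aux (a : ℕ → ℂ) (hsum : Summable fun k => ‖a k‖)
    {i : ℕ → ℕ} (hi : Function.Injective i) :
    Summable fun m => ‖a (i m)‖ :=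
  hsum.comp_injective hi

private lemma haar_inj_aux (j : ℕ) (hj : 1 ≤ j) :
    Function.Injective fun m : ℕ => j * (m + 1) := by
  intro x y h
  simp only at h
  have := Nat.eq_of_mul_eq_mul_left hj h
  omega

/-- The sum of `a (j * m)` over `m ≥ 1` divisible by `d` vanishes. -/
private lemma haar_dvd_sum_aux (a : ℕ → ℂ)
    (hzero : ∀ n : ℕ, 1 ≤ n → ∑' k : ℕ, a (n * (k + 1)) = 0)
    (j d : ℕ) (hj : 1 ≤ j) (hd : 1 ≤ d) :
    ∑' m : ℕ, (if d ∣ (m + 1) then a (j * (m + 1)) else 0) = 0 := by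
  set f : ℕ → ℂ := fun m => if d ∣ (m + 1) then a (j * (m + 1)) else 0 with hf
  have hginj : Function.Injective fun k : ℕ => d * k + (d - 1) := by
    intro x y h
    simp only [Nat.add_right_cancel_iff] at h
    exact Nat.eq_of_mul_eq_mul_left hd h
  have hrange : Function.support f ⊆ Set.range fun k : ℕ => d * k + (d - 1) := by
    intro m hm
    simp only [Function.mem_support, hf] at hm
    by_cases h : d ∣ (m + 1)
    · obtain ⟨c, hc⟩ := h
      have hc1 : 1 ≤ c := by
        rcases Nat.eq_zero_or_pos c with h0 | h0
        · rw [h0, Nat.mul_zero] at hc; omega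
        · exact h0
      refine ⟨c - 1, ?_⟩
      simp only
      have h2 : d ≤ d * c := Nat.le_mul_of_pos_right d hc1
      have h3 : d * (c - 1) = d * c - d := by
        rw [Nat.mul_sub, Nat.mul_one]
      omega
    · simp [h] at hm
  have hkey : ∀ k : ℕ, f (d * k + (d - 1)) = a (j * d * (k + 1)) := by
    intro k
    have h1 : d * k + (d - 1) + 1 = d * (k + 1) := by
      rw [Nat.mul_add, Nat.mul_one]
      omega
    simp only [hf, h1, dvd_mul_right, if_true, mul_assoc]
  calc ∑' m, f m = ∑' k, f (d * k + (d - 1)) := (hginj.tsum_eq hrange).symm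
    _ = ∑' k, a (j * d * (k + 1)) := by simp_rw [hkey]
    _ = 0 := hzero (j * d) (Nat.one_le_iff_ne_zero.mpr (by positivity))

/-- The sum of `a (j * m)` over `m ≥ 1` coprime to the primorial vanishes. -/
private lemma haar_coprime_sum_aux (a : ℕ → ℂ) (hsum : Summable fun k => ‖a k‖)
    (hzero : ∀ n : ℕ, 1 ≤ n → ∑' k : ℕ, a (n * (k + 1)) = 0)
    (j : ℕ) (hj : 1 ≤ j) (N : ℕ) :
    ∑' m : ℕ, (if Nat.Coprime (m + 1) (primorial N) then a (j * (m + 1)) else 0) = 0 := by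
  set Q := primorial N with hQdef
  have hQ0 : Q ≠ 0 := (primorial_pos N).ne'
  have hA : Summable fun m : ℕ => ‖a (j * (m + 1))‖ :=
    haar_summable_aux a hsum (haar_inj_aux j hj)
  -- pointwise Möbius identity
  have key : ∀ m : ℕ, (if Nat.Coprime (m + 1) Q then a (j * (m + 1)) else 0)
      = ∑ d ∈ Q.divisors, ((moebius d : ℤ) : ℂ) * (if d ∣ (m + 1) then a (j * (m + 1)) else 0) := by
    intro m
    have step1 : ∑ d ∈ Q.divisors, ((moebius d : ℤ) : ℂ) * (if d ∣ (m + 1) then a (j * (m + 1)) else 0)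
        = (∑ d ∈ Q.divisors.filter (· ∣ (m + 1)), ((moebius d : ℤ) : ℂ)) * a (j * (m + 1)) := by
      rw [Finset.sum_filter, Finset.sum_mul]
      refine Finset.sum_congr rfl fun d _ => ?_
      split_ifs <;> simp
    have hgcd0 : Nat.gcd (m + 1) Q ≠ 0 := Nat.gcd_ne_zero_left (Nat.succ_ne_zero m)
    have hfil : Q.divisors.filter (· ∣ (m + 1)) = (Nat.gcd (m + 1) Q).divisors := by
      ext d
      simp only [Finset.mem_filter, Nat.mem_divisors, Nat.dvd_gcd_iff]
      constructor
      · rintro ⟨⟨h1, _⟩, h2⟩; exact ⟨⟨h2, h1⟩, hgcd0⟩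
      · rintro ⟨⟨h1, h2⟩, _⟩; exact ⟨⟨h2, hQ0⟩, h1⟩
    have hmob : ∑ d ∈ (Nat.gcd (m + 1) Q).divisors, (moebius d : ℤ)
        = if Nat.gcd (m + 1) Q = 1 then 1 else 0 := by
      calc ∑ d ∈ (Nat.gcd (m + 1) Q).divisors, (moebius d : ℤ)
          = (moebius * (ζ : ArithmeticFunction ℤ)) (Nat.gcd (m + 1) Q) :=
            (coe_mul_zeta_apply).symm
        _ = (1 : ArithmeticFunction ℤ) (Nat.gcd (m + 1) Q) := by
            rw [moebius_mul_coe_zeta]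
        _ = if Nat.gcd (m + 1) Q = 1 then 1 else 0 := one_apply
    rw [step1, hfil]
    have : (∑ d ∈ (Nat.gcd (m + 1) Q).divisors, ((moebius d : ℤ) : ℂ))
        = ((if Nat.gcd (m + 1) Q = 1 then 1 else 0 : ℤ) : ℂ) := by
      rw [← Int.cast_sum, hmob]
    rw [this]
    unfold Nat.Coprime
    split_ifs <;> simp
  -- summability of each summand
  have hsummand : ∀ d ∈ Q.divisors,
      Summable fun m : ℕ => ((moebius d : ℤ) : ℂ) * (if d ∣ (m + 1) then a (j * (m + 1)) else 0) := by
    intro d _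
    refine Summable.mul_left _ ?_
    refine Summable.of_norm_bounded hA fun m => ?_
    split_ifs <;> simp
  calc ∑' m : ℕ, (if Nat.Coprime (m + 1) Q then a (j * (m + 1)) else 0)
      = ∑' m : ℕ, ∑ d ∈ Q.divisors,
          ((moebius d : ℤ) : ℂ) * (if d ∣ (m + 1) then a (j * (m + 1)) else 0) := by
        exact tsum_congr key
    _ = ∑ d ∈ Q.divisors, ∑' m : ℕ,
          ((moebius d : ℤ) : ℂ) * (if d ∣ (m + 1) then a (j * (m + 1)) else 0) :=
        Summable.tsum_finsetSum hsummand
    _ = 0 := by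
        refine Finset.sum_eq_zero fun d hd => ?_
        rw [tsum_mul_left, haar_dvd_sum_aux a hzero j d hj (Nat.pos_of_mem_divisors hd), mul_zero]

/-- Haar's Lemma: if `(a_k)` is absolutely summable and all dilated sums
`∑_k a_{nk}` vanish, then `a` vanishes (on indices ≥ 1). -/
theorem haar_lemma (a : ℕ → ℂ)
    (hsum : Summable fun k => ‖a k‖)
    (hzero : ∀ n : ℕ, 1 ≤ n → ∑' k : ℕ, a (n * (k + 1)) = 0) :
    ∀ j : ℕ, 1 ≤ j → a j = 0 := by
  intro j hj
  have hA : Summable fun m : ℕ => ‖a (j * (m + 1))‖ :=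
    haar_summable_aux a hsum (haar_inj_aux j hj)
  have hA2 : Summable fun m : ℕ => ‖a (j * (m + 2))‖ := by
    refine haar_summable_aux a hsum ?_
    intro x y h
    simp only at h
    have := Nat.eq_of_mul_eq_mul_left hj h
    omega
  -- the key estimate for each N
  have key : ∀ N : ℕ, ‖a j‖ ≤ ∑' k : ℕ, ‖a (j * (k + N + 2))‖ := by
    intro N
    set Q := primorial (N + 1) with hQdef
    set f : ℕ → ℂ := fun m => if Nat.Coprime (m + 1) Q then a (j * (m + 1)) else 0 with hf
    clear_value f
    have hfs : Summable f := by
      refine Summable.of_norm_bounded hA fun m => ?_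
      simp only [hf]
      split_ifs <;> simp
    have htsum0 : ∑' m, f m = 0 := by
      rw [hf]; exact haar_coprime_sum_aux a hsum hzero j hj (N + 1)
    have hf0 : f 0 = a j := by
      simp [hf, Nat.coprime_one_left]
    have hsplit : ∑' m, f m = f 0 + ∑' m, f (m + 1) := Summable.tsum_eq_zero_add hfs
    have haj : a j = -∑' m, f (m + 1) := by
      rw [htsum0] at hsplit
      rw [← hf0]
      linear_combination -hsplit
    -- norm of f (m+1) is bounded and vanishes for m < N
    have hFnormsum : Summable fun m : ℕ => ‖f (m + 1)‖ := by
      refine Summable.of_norm_bounded hA2 fun m => ?_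
      simp only [hf, norm_norm]
      split_ifs <;> simp [show m + 1 + 1 = m + 2 by omega]
    have hvanish : ∀ m : ℕ, f (m + 1) ≠ 0 → N ≤ m := by
      intro m hm
      by_contra hlt
      push_neg at hlt
      have hcop : Nat.Coprime (m + 2) Q := by
        by_contra hc
        simp [hf, show m + 1 + 1 = m + 2 by omega, hc] at hm
      have h2 : 2 ≤ m + 2 := by omega
      set p := (m + 2).minFac with hp
      have hpp : p.Prime := Nat.minFac_prime (by omega)
      have hpd : p ∣ m + 2 := Nat.minFac_dvd _
      have hple : p ≤ N + 1 := le_trans (Nat.minFac_le (by omega)) (by omega)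
      have hpQ : p ∣ Q := by
        rw [hQdef, primorial]
        exact Finset.dvd_prod_of_mem _ (by
          simp only [Finset.mem_filter, Finset.mem_range]
          exact ⟨by omega, hpp⟩)
      have : p ∣ 1 := hcop ▸ Nat.dvd_gcd hpd hpQ
      exact hpp.one_lt.ne' (Nat.dvd_one.mp this)
    -- reindex: support lives in m ≥ N
    have hshift : ∑' k : ℕ, ‖f (k + N + 1)‖ = ∑' m : ℕ, ‖f (m + 1)‖ := by
      refine Function.Injective.tsum_eq (g := fun k : ℕ => k + N)
        (f := fun m : ℕ => ‖f (m + 1)‖) (add_left_injective N) ?_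
      intro m hm
      simp only [Function.mem_support, ne_eq, norm_eq_zero] at hm
      exact ⟨m - N, by have := hvanish m hm; show m - N + N = m; omega⟩
    have hbound : ∑' k : ℕ, ‖f (k + N + 1)‖ ≤ ∑' k : ℕ, ‖a (j * (k + N + 2))‖ := by
      refine Summable.tsum_le_tsum (fun k => ?_) ?_ ?_
      · show ‖f (k + N + 1)‖ ≤ ‖a (j * (k + N + 2))‖
        have e : k + N + 1 + 1 = k + N + 2 := by omega
        simp only [hf, e]
        split_ifs <;> simp
      · exact (summable_nat_add_iff N).mpr hFnormsum
      · refine haar_summable_aux a hsum ?_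
        intro x y h
        simp only at h
        have := Nat.eq_of_mul_eq_mul_left hj h
        omega
    calc ‖a j‖ = ‖∑' m, f (m + 1)‖ := by rw [haj, norm_neg]
      _ ≤ ∑' m, ‖f (m + 1)‖ := norm_tsum_le_tsum_norm hFnormsum
      _ = ∑' k : ℕ, ‖f (k + N + 1)‖ := hshift.symm
      _ ≤ ∑' k : ℕ, ‖a (j * (k + N + 2))‖ := hbound
  -- take the limit N → ∞
  have hlim : Tendsto (fun N : ℕ => ∑' k : ℕ, ‖a (j * (k + N + 2))‖) atTop (𝓝 0) := by
    exact tendsto_sum_nat_add (f := fun m : ℕ => ‖a (j * (m + 2))‖)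
  have hle : ‖a j‖ ≤ 0 := ge_of_tendsto hlim (Eventually.of_forall key)
  have : ‖a j‖ = 0 := le_antisymm hle (norm_nonneg _)
  exact norm_eq_zero.mp this
end

section
/- Let $x = (x_k)_{k\geq 1}$ be a bounded complex sequence with $x_1 = 1$ that is totally multiplicative, i.e., $x_{nk} = x_n x_k$ for all $n, k \in \mathbb{N}$. If $(a_k)$ satisfies $\sum_{k\geq 1}|a_k| < \infty$ and $\sum_{k\geq 1} x_k a_{nk} = 0$ for all $n \geq 1$, then $a_j = 0$ for all $j \geq 1$. -/
set_option maxHeartbeats 1000000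

open ArithmeticFunction in
lemma moebius_sum_divisors (n : ℕ) :
    ∑ d ∈ n.divisors, (ArithmeticFunction.moebius d : ℂ) = if n = 1 then 1 else 0 := by
  have h := congrArg (fun f : ArithmeticFunction ℤ => f n) moebius_mul_coe_zeta
  simp only [coe_mul_zeta_apply, one_apply] at h
  calc ∑ d ∈ n.divisors, (ArithmeticFunction.moebius d : ℂ)
      = ((∑ d ∈ n.divisors, ArithmeticFunction.moebius d : ℤ) : ℂ) := by push_cast; rfl
    _ = if n = 1 then 1 else 0 := by rw [h]; split <;> simp

lemma filter_divisors_gcd (P m : ℕ) (hP : P ≠ 0) :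
    P.divisors.filter (· ∣ m) = (Nat.gcd P m).divisors := by
  ext d
  simp only [Finset.mem_filter, Nat.mem_divisors, Nat.dvd_gcd_iff]
  constructor
  · rintro ⟨⟨h1, _⟩, h2⟩; exact ⟨⟨h1, h2⟩, Nat.gcd_ne_zero_left hP⟩
  · rintro ⟨⟨h1, h2⟩, _⟩; exact ⟨⟨h1, hP⟩, h2⟩

/-- Extended Haar's Lemma: for a bounded totally multiplicative sequence `x`
with `x 1 = 1`, the weighted dilated sums of an absolutely summable `a`
vanishing forces `a = 0`. -/
theorem extended_haar_lemma (x a : ℕ → ℂ)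
    (hbdd : ∃ M : ℝ, ∀ k : ℕ, 1 ≤ k → ‖x k‖ ≤ M)
    (hx1 : x 1 = 1)
    (hmult : ∀ n k : ℕ, 1 ≤ n → 1 ≤ k → x (n * k) = x n * x k)
    (hsum : Summable fun k => ‖a k‖)
    (hzero : ∀ n : ℕ, 1 ≤ n → ∑' k : ℕ, x (k + 1) * a (n * (k + 1)) = 0) :
    ∀ j : ℕ, 1 ≤ j → a j = 0 := by
  intro j hj
  obtain ⟨M, hM⟩ := hbdd
  have hjne : j ≠ 0 := by omega
  have hM1 : (1 : ℝ) ≤ M := by simpa [hx1] using hM 1 le_rfl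
  set h : ℕ → ℂ := fun m => if m = 0 then 0 else x m * a (j * m) with hh
  have hnorm : ∀ m, ‖h m‖ ≤ M * ‖a (j * m)‖ := by
    intro m
    by_cases hm : m = 0
    · simp only [hh, hm, if_pos rfl, norm_zero]
      positivity
    · simp only [hh, if_neg hm, norm_mul]
      exact mul_le_mul_of_nonneg_right (hM m (by omega)) (norm_nonneg _)
  have hsa : Summable (fun m => ‖a (j * m)‖) := hsum.comp_injective (mul_right_injective₀ hjne)
  have hsnh : Summable (fun m => ‖h m‖) :=
    Summable.of_nonneg_of_le (fun _ => norm_nonneg _) hnorm (hsa.mul_left M)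
  have hsh : Summable h := hsnh.of_norm
  -- Step 1: sums over multiples of d vanish
  have key1 : ∀ d : ℕ, 1 ≤ d → ∑' m, (if d ∣ m then h m else 0) = 0 := by
    intro d hd
    have hdne : d ≠ 0 := by omega
    have hsub : Summable fun k => h (d * k) := hsh.comp_injective (mul_right_injective₀ hdne)
    have e1 : ∑' k, h (d * k) = ∑' m, (if d ∣ m then h m else 0) := by
      have hsupp : Function.support (fun m => if d ∣ m then h m else 0) ⊆
          Set.range (fun k => d * k) := by
        intro m hm
        by_cases hdm : d ∣ m
        · obtain ⟨c, rfl⟩ := hdm; exact ⟨c, rfl⟩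
        · simp [Function.mem_support, if_neg hdm] at hm
      have := Function.Injective.tsum_eq (g := fun k => d * k) (mul_right_injective₀ hdne)
        (f := fun m => if d ∣ m then h m else 0) hsupp
      rw [← this]
      exact tsum_congr fun k => (if_pos (dvd_mul_right d k)).symm
    have e2 : ∑' k, h (d * k) = ∑' k, h (d * (k + 1)) := by
      rw [Summable.tsum_eq_zero_add hsub]
      simp [hh]
    have e3 : ∑' k, h (d * (k + 1)) = x d * ∑' k, x (k + 1) * a ((j * d) * (k + 1)) := by
      rw [← tsum_mul_left]
      refine tsum_congr fun k => ?_
      have h1 : d * (k + 1) ≠ 0 := by positivity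
      simp only [hh, if_neg h1]
      rw [hmult d (k + 1) hd (by omega), mul_assoc, mul_assoc j d]
    rw [← e1, e2, e3, hzero (j * d) (by exact Nat.one_le_iff_ne_zero.2 (by positivity)), mul_zero]
  -- Step 2: sums over m coprime to N! vanish
  have hs_ite : ∀ p : ℕ → Prop, ∀ inst : DecidablePred p,
      Summable fun m => (if p m then h m else 0) := by
    intro p inst
    refine Summable.of_norm_bounded hsnh fun m => ?_
    split <;> simp
  have key2 : ∀ N : ℕ, ∑' m, (if Nat.gcd (N.factorial) m = 1 then h m else 0) = 0 := by
    intro N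
    set P := N.factorial with hP
    have hPne : P ≠ 0 := N.factorial_ne_zero
    calc ∑' m, (if Nat.gcd P m = 1 then h m else 0)
        = ∑' m, ∑ d ∈ P.divisors, (ArithmeticFunction.moebius d : ℂ) * (if d ∣ m then h m else 0) := by
          refine tsum_congr fun m => ?_
          have e : ∑ d ∈ P.divisors, (ArithmeticFunction.moebius d : ℂ) * (if d ∣ m then h m else 0)
              = (∑ d ∈ P.divisors.filter (· ∣ m), (ArithmeticFunction.moebius d : ℂ)) * h m := by
            rw [Finset.sum_filter, Finset.sum_mul]
            refine Finset.sum_congr rfl fun d _ => ?_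
            split_ifs <;> ring
          rw [e, filter_divisors_gcd P m hPne, moebius_sum_divisors]
          split_ifs <;> simp
      _ = ∑ d ∈ P.divisors, ∑' m, (ArithmeticFunction.moebius d : ℂ) * (if d ∣ m then h m else 0) :=
          Summable.tsum_finsetSum fun d _ => (hs_ite _ _).mul_left _
      _ = 0 := by
          refine Finset.sum_eq_zero fun d hd => ?_
          rw [tsum_mul_left, key1 d (Nat.pos_of_mem_divisors hd), mul_zero]
  -- Step 3: split off m = 1
  have key3 : ∀ N : ℕ,
      a j = - ∑' m, (if Nat.gcd (N.factorial) m = 1 ∧ m ≠ 1 then h m else 0) := by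
    intro N
    set P := N.factorial with hP
    have hsplit : (fun m => if Nat.gcd P m = 1 then h m else 0)
        = fun m => (if m = 1 then h 1 else 0)
            + (if Nat.gcd P m = 1 ∧ m ≠ 1 then h m else 0) := by
      funext m
      by_cases hm : m = 1
      · subst hm; simp [Nat.gcd_one_right]
      · by_cases hg : Nat.gcd P m = 1 <;> simp [hm, hg]
    have h2 := key2 N
    have hS1 : Summable fun m : ℕ => if m = 1 then h 1 else 0 :=
      summable_of_ne_finset_zero (s := {1}) (by intro m hm; simp at hm; simp [hm])
    rw [hsplit] at h2
    rw [Summable.tsum_add hS1 (hs_ite _ _), tsum_ite_eq] at h2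
    have hh1 : h 1 = a j := by simp [hh, hx1]
    rw [hh1] at h2
    linear_combination h2
  -- Step 4: bound the tail
  have key4 : ∀ N : ℕ, ‖a j‖ ≤ ∑' k, ‖h (k + (N + 1))‖ := by
    intro N
    set P := N.factorial with hP
    set f2 : ℕ → ℂ := fun m => if Nat.gcd P m = 1 ∧ m ≠ 1 then h m else 0 with hf2
    have hsupp : ∀ m, f2 m ≠ 0 → N + 1 ≤ m := by
      intro m hm
      by_contra hlt
      push_neg at hlt
      rcases Nat.lt_or_ge m 2 with hm2 | hm2
      · interval_cases m
        · simp [hf2, hh] at hm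
        · simp [hf2] at hm
      · have hmne : m ≠ 1 := by omega
        have hcop : Nat.gcd P m = 1 := by
          by_contra hg; simp [hf2, hg, hmne] at hm
        have hp : Nat.Prime m.minFac := Nat.minFac_prime (by omega)
        have hple : m.minFac ≤ m := Nat.minFac_le (by omega)
        have hpN : m.minFac ≤ N := le_trans hple (by omega)
        have hdvd : m.minFac ∣ P := Nat.dvd_factorial hp.pos hpN
        have : m.minFac ∣ Nat.gcd P m := Nat.dvd_gcd hdvd (Nat.minFac_dvd m)
        rw [hcop] at this
        exact Nat.Prime.one_lt hp |>.ne' (Nat.eq_one_of_dvd_one this ▸ rfl)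
    have hshift : ∑' m, f2 m = ∑' k, f2 (k + (N + 1)) := by
      refine (Function.Injective.tsum_eq (g := fun k => k + (N + 1))
        (add_left_injective (N + 1)) ?_).symm
      intro m hm
      exact ⟨m - (N + 1), show m - (N + 1) + (N + 1) = m by have := hsupp m hm; omega⟩
    have hbound : ‖∑' k, f2 (k + (N + 1))‖ ≤ ∑' k, ‖h (k + (N + 1))‖ := by
      refine tsum_of_norm_bounded (((summable_nat_add_iff (N + 1)).2 hsnh).hasSum) fun k => ?_
      simp only [hf2]
      split <;> simp
    calc ‖a j‖ = ‖∑' m, f2 m‖ := by rw [key3 N]; exact norm_neg _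
      _ = ‖∑' k, f2 (k + (N + 1))‖ := by rw [hshift]
      _ ≤ ∑' k, ‖h (k + (N + 1))‖ := hbound
  -- Conclusion
  have htail := tendsto_sum_nat_add (f := fun m => ‖h m‖)
  have hle : ‖a j‖ ≤ 0 := by
    refine ge_of_tendsto htail ?_
    refine Filter.eventually_atTop.2 ⟨1, fun i hi => ?_⟩
    have := key4 (i - 1)
    have he : i - 1 + 1 = i := by omega
    rwa [he] at this
  simpa using le_antisymm hle (norm_nonneg _)
end

section
/- Let $p' > 1$, $s > 1/p'$, $t \geq 1/p'$, and define the weight $w_\alpha = \left(\frac{\alpha!}{|\alpha|!}\right)^t (|\alpha|+1)^s$ on multi-indices $\alpha \in \mathbb{Z}_+^N$. Then $\sup_{\gamma \in \mathbb{Z}_+^N} \sum_{\alpha + \beta = \gamma} \left(\frac{w_\gamma}{w_\alpha w_\beta}\right)^{p'} < \infty$. -/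
open Finset

/-- The Dirichlet–Drury–Arveson weight `w_α = (α!/|α|!)^t (|α|+1)^s`. -/
noncomputable def daWeight (N : ℕ) (s t : ℝ) (α : Fin N → ℕ) : ℝ :=
  ((∏ i, Nat.factorial (α i) : ℕ) / (Nat.factorial (∑ i, α i) : ℝ)) ^ t *
    ((∑ i, α i : ℕ) + 1 : ℝ) ^ s

lemma sum_Iic_cons {N : ℕ} {M : Type*} [AddCommMonoid M] (g0 : ℕ) (g' : Fin N → ℕ)
    (f : (Fin (N+1) → ℕ) → M) :
    ∑ α ∈ Finset.Iic (Fin.cons g0 g'), f α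
      = ∑ j ∈ Finset.Iic g0, ∑ α' ∈ Finset.Iic g', f (Fin.cons j α') := by
  rw [← Finset.sum_product']
  refine Finset.sum_nbij' (fun α => (α 0, Fin.tail α)) (fun p => Fin.cons p.1 p.2)
    ?_ ?_ ?_ ?_ ?_
  · intro a ha
    rw [Finset.mem_Iic] at ha
    rw [Finset.mem_product, Finset.mem_Iic, Finset.mem_Iic]
    rw [← Fin.cons_self_tail a, Fin.cons_le_cons] at ha
    exact ha
  · intro p hp
    rw [Finset.mem_product, Finset.mem_Iic, Finset.mem_Iic] at hp
    rw [Finset.mem_Iic]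
    exact Fin.cons_le_cons.mpr hp
  · intro a _; exact Fin.cons_self_tail a
  · intro p _; simp
  · intro a _; rw [Fin.cons_self_tail a]

lemma vand : ∀ {N : ℕ} (γ : Fin N → ℕ) (k : ℕ),
    (∑ α ∈ Finset.Iic γ, if (∑ i, α i) = k then ∏ i, (γ i).choose (α i) else 0)
      = (∑ i, γ i).choose k := by
  intro N
  induction N with
  | zero =>
      intro γ k
      have h1 : (Finset.Iic γ) = {γ} := by
        ext α; simp [Subsingleton.elim α γ]
      rcases k with _ | k <;> simp [h1]
  | succ N ih =>
      intro γ k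
      rw [← Fin.cons_self_tail γ]
      set g0 := γ 0 with hg0
      set g' := Fin.tail γ with hg'
      rw [sum_Iic_cons]
      simp only [Fin.sum_univ_succ, Fin.prod_univ_succ, Fin.cons_zero, Fin.cons_succ]
      have inner : ∀ j, (∑ α' ∈ Finset.Iic g',
            if j + ∑ i, α' i = k then g0.choose j * ∏ i, (g' i).choose (α' i) else 0)
          = if j ≤ k then g0.choose j * (∑ i, g' i).choose (k - j) else 0 := by
        intro j
        by_cases hj : j ≤ k
        · rw [if_pos hj, ← ih g' (k - j), Finset.mul_sum]
          apply Finset.sum_congr rfl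
          intro α' _
          have hiff : (j + ∑ i, α' i = k) ↔ (∑ i, α' i = k - j) := by omega
          simp [hiff, mul_ite]
        · rw [if_neg hj]
          apply Finset.sum_eq_zero
          intro α' _
          rw [if_neg (by omega)]
      rw [Finset.sum_congr rfl (fun j _ => inner j)]
      rw [Nat.add_choose_eq, Finset.Nat.sum_antidiagonal_eq_sum_range_succ_mk]
      -- ∑ j ∈ Iic g0, (if j ≤ k then F j else 0) = ∑ a ∈ range (k+1), F a
      have hL : ∑ j ∈ Finset.Iic g0, (if j ≤ k then g0.choose j * (∑ i, g' i).choose (k - j) else 0)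
          = ∑ j ∈ Finset.range (g0 + k + 2), (if j ≤ k then g0.choose j * (∑ i, g' i).choose (k - j) else 0) := by
        apply Finset.sum_subset
        · intro x hx; rw [Finset.mem_Iic] at hx; rw [Finset.mem_range]; omega
        · intro x _ hx
          rw [Finset.mem_Iic] at hx
          have : g0.choose x = 0 := Nat.choose_eq_zero_of_lt (by omega)
          simp [this]
      have hR : ∑ j ∈ Finset.range (g0 + k + 2), (if j ≤ k then g0.choose j * (∑ i, g' i).choose (k - j) else 0)
          = ∑ a ∈ Finset.range (k+1), g0.choose a * (∑ i, g' i).choose (k - a) := by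
        calc ∑ j ∈ Finset.range (g0 + k + 2), (if j ≤ k then g0.choose j * (∑ i, g' i).choose (k - j) else 0)
            = ∑ j ∈ Finset.range (k+1), (if j ≤ k then g0.choose j * (∑ i, g' i).choose (k - j) else 0) := by
              refine (Finset.sum_subset (by intro x hx; rw [Finset.mem_range] at *; omega) ?_).symm
              intro x _ hx
              rw [Finset.mem_range] at hx
              rw [if_neg (by omega)]
          _ = ∑ a ∈ Finset.range (k+1), g0.choose a * (∑ i, g' i).choose (k - a) := by
              apply Finset.sum_congr rfl
              intro a ha
              rw [Finset.mem_range] at ha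
              rw [if_pos (by omega)]
      rw [hL, hR]

lemma aux_g1 (K M : ℝ) (hK : 0 ≤ K) (hKM : K ≤ M) :
    (K + M + 1) * (K + 1) ≤ 2 * ((K + 1) * (M + 1)) := by nlinarith

lemma aux_g2 (K M : ℝ) (hM : 0 ≤ M) (hMK : M ≤ K) :
    (K + M + 1) * (M + 1) ≤ 2 * ((K + 1) * (M + 1)) := by nlinarith

set_option maxHeartbeats 1000000 in
lemma term_bound (N : ℕ) (p' s t : ℝ) (hp0 : 0 < p') (hτ : 1 ≤ t * p')
    (hσ0 : 0 ≤ s * p')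
    (γ α : Fin N → ℕ) (k : ℕ) (hαm : α ∈ Finset.Iic γ) (hαk : ∑ i, α i = k)
    (hkn : k ≤ ∑ i, γ i) :
    (daWeight N s t γ / (daWeight N s t α * daWeight N s t (γ - α))) ^ p'
      ≤ ((∏ i, (γ i).choose (α i) : ℕ) : ℝ) / ((∑ i, γ i).choose k : ℝ) *
        ((2:ℝ)^(s*p') * ((((k:ℝ))+1)^(-(s*p')) + (((∑ i, γ i - k : ℕ):ℝ)+1)^(-(s*p')))) := by
  set n := ∑ i, γ i with hn
  have hle : ∀ i, α i ≤ γ i := fun i => Finset.mem_Iic.mp hαm i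
  have hβsum : ∑ i, (γ - α) i = n - k := by
    have h1 : ∑ i, (α i + (γ - α) i) = n := by
      rw [hn]; exact Finset.sum_congr rfl fun i _ => Nat.add_sub_cancel' (hle i)
    rw [Finset.sum_add_distrib, hαk] at h1
    omega
  set Fγ : ℝ := ((∏ i, (γ i).factorial : ℕ) : ℝ) with hFγ
  set Fα : ℝ := ((∏ i, (α i).factorial : ℕ) : ℝ) with hFα
  set Fβ : ℝ := ((∏ i, ((γ - α) i).factorial : ℕ) : ℝ) with hFβ
  set fγ : ℝ := ((n.factorial : ℕ) : ℝ) with hfγ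
  set fα : ℝ := ((k.factorial : ℕ) : ℝ) with hfα
  set fβ : ℝ := (((n - k).factorial : ℕ) : ℝ) with hfβ
  set gγ : ℝ := (n:ℝ)+1 with hgγ
  set gα : ℝ := (k:ℝ)+1 with hgα
  set gβ : ℝ := ((n - k : ℕ):ℝ)+1 with hgβ
  set PcR : ℝ := ((∏ i, (γ i).choose (α i) : ℕ) : ℝ) with hPcR
  set CnkR : ℝ := ((n.choose k : ℕ) : ℝ) with hCnkR
  have hFγ0 : (0:ℝ) < Fγ := by
    rw [hFγ]; exact_mod_cast Finset.prod_pos fun i _ => Nat.factorial_pos _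
  have hFα0 : (0:ℝ) < Fα := by
    rw [hFα]; exact_mod_cast Finset.prod_pos fun i _ => Nat.factorial_pos _
  have hFβ0 : (0:ℝ) < Fβ := by
    rw [hFβ]; exact_mod_cast Finset.prod_pos fun i _ => Nat.factorial_pos _
  have hfγ0 : (0:ℝ) < fγ := by rw [hfγ]; exact_mod_cast n.factorial_pos
  have hfα0 : (0:ℝ) < fα := by rw [hfα]; exact_mod_cast k.factorial_pos
  have hfβ0 : (0:ℝ) < fβ := by rw [hfβ]; exact_mod_cast (n-k).factorial_pos
  have hgγ0 : (0:ℝ) < gγ := by rw [hgγ]; positivity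
  have hgα0 : (0:ℝ) < gα := by rw [hgα]; positivity
  have hgβ0 : (0:ℝ) < gβ := by rw [hgβ]; positivity
  have hPc0 : (0:ℝ) < PcR := by
    rw [hPcR]; exact_mod_cast Finset.prod_pos fun i _ => Nat.choose_pos (hle i)
  have hCnk0 : (0:ℝ) < CnkR := by rw [hCnkR]; exact_mod_cast Nat.choose_pos hkn
  have hwγ : daWeight N s t γ = (Fγ / fγ)^t * gγ^s := by
    simp only [daWeight, ← hn, hFγ, hfγ, hgγ]
  have hwα : daWeight N s t α = (Fα / fα)^t * gα^s := by
    simp only [daWeight, hαk, hFα, hfα, hgα]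
  have hwβ : daWeight N s t (γ - α) = (Fβ / fβ)^t * gβ^s := by
    simp only [daWeight, hβsum, hFβ, hfβ, hgβ]
  have d1 : (Fγ/fγ)^t = Fγ^t/fγ^t := Real.div_rpow hFγ0.le hfγ0.le t
  have d2 : (Fα/fα)^t = Fα^t/fα^t := Real.div_rpow hFα0.le hfα0.le t
  have d3 : (Fβ/fβ)^t = Fβ^t/fβ^t := Real.div_rpow hFβ0.le hfβ0.le t
  have d7 : (Fγ*fα*fβ/(Fα*Fβ*fγ))^t = (Fγ^t*fα^t*fβ^t)/(Fα^t*Fβ^t*fγ^t) := by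
    rw [Real.div_rpow (by positivity) (by positivity),
        Real.mul_rpow (by positivity) (by positivity),
        Real.mul_rpow (by positivity) (by positivity),
        Real.mul_rpow (by positivity) (by positivity),
        Real.mul_rpow (by positivity) (by positivity)]
  have d8 : (gγ/(gα*gβ))^s = gγ^s/(gα^s*gβ^s) := by
    rw [Real.div_rpow hgγ0.le (by positivity), Real.mul_rpow hgα0.le hgβ0.le]
  have hratio : daWeight N s t γ / (daWeight N s t α * daWeight N s t (γ - α))
      = (Fγ * fα * fβ / (Fα * Fβ * fγ))^t * (gγ/(gα*gβ))^s := by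
    rw [hwγ, hwα, hwβ, d1, d2, d3, d7, d8]
    have h1 : (0:ℝ) < Fα ^ t := Real.rpow_pos_of_pos hFα0 t
    have h2 : (0:ℝ) < Fβ ^ t := Real.rpow_pos_of_pos hFβ0 t
    have h3 : (0:ℝ) < fγ ^ t := Real.rpow_pos_of_pos hfγ0 t
    have h4 : (0:ℝ) < gα ^ s := Real.rpow_pos_of_pos hgα0 s
    have h5 : (0:ℝ) < gβ ^ s := Real.rpow_pos_of_pos hgβ0 s
    have h6 : (0:ℝ) < fα ^ t := Real.rpow_pos_of_pos hfα0 t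
    have h7 : (0:ℝ) < fβ ^ t := Real.rpow_pos_of_pos hfβ0 t
    have h8 : (0:ℝ) < Fγ ^ t := Real.rpow_pos_of_pos hFγ0 t
    have h9 : (0:ℝ) < gγ ^ s := Real.rpow_pos_of_pos hgγ0 s
    field_simp
  have e1 : Fγ = PcR * Fα * Fβ := by
    rw [hFγ, hFα, hFβ, hPcR]
    have h : (∏ i, (γ i).factorial) =
        (∏ i, (γ i).choose (α i)) * (∏ i, (α i).factorial) * (∏ i, ((γ - α) i).factorial) := by
      rw [← Finset.prod_mul_distrib, ← Finset.prod_mul_distrib]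
      exact Finset.prod_congr rfl fun i _ =>
        (Nat.choose_mul_factorial_mul_factorial (hle i)).symm
    exact_mod_cast congrArg (Nat.cast : ℕ → ℝ) h
  have e2 : fγ = CnkR * fα * fβ := by
    rw [hfγ, hfα, hfβ, hCnkR]
    exact_mod_cast congrArg (Nat.cast : ℕ → ℝ)
      (Nat.choose_mul_factorial_mul_factorial hkn).symm
  have hRval : Fγ * fα * fβ / (Fα * Fβ * fγ) = PcR / CnkR := by
    rw [e1, e2]; field_simp
  have hPcle : PcR ≤ CnkR := by
    rw [hPcR, hCnkR]
    have h := Finset.single_le_sum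
      (f := fun α' => if (∑ i, α' i) = k then ∏ i, (γ i).choose (α' i) else 0)
      (fun _ _ => by positivity) hαm
    rw [vand γ k] at h
    simp only [hαk, if_pos] at h
    exact_mod_cast h
  have hR1 : PcR / CnkR ≤ 1 := (div_le_one hCnk0).2 hPcle
  have hRpos : 0 < PcR / CnkR := div_pos hPc0 hCnk0
  rw [hratio, hRval,
      Real.mul_rpow (Real.rpow_nonneg hRpos.le t) (Real.rpow_nonneg (by positivity) s),
      ← Real.rpow_mul hRpos.le, ← Real.rpow_mul (by positivity : (0:ℝ) ≤ gγ/(gα*gβ))]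
  have b1 : (PcR / CnkR) ^ (t * p') ≤ PcR / CnkR := by
    calc (PcR / CnkR) ^ (t * p') ≤ (PcR / CnkR) ^ (1:ℝ) :=
          Real.rpow_le_rpow_of_exponent_ge hRpos hR1 hτ
      _ = PcR / CnkR := Real.rpow_one _
  have hncast : (n:ℝ) = (k:ℝ) + ((n - k : ℕ):ℝ) := by
    have h : k + (n - k) = n := Nat.add_sub_cancel' hkn
    exact_mod_cast h.symm
  have b2 : (gγ/(gα*gβ)) ^ (s * p') ≤ (2:ℝ)^(s*p') * (gα^(-(s*p')) + gβ^(-(s*p'))) := by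
    have hkc : (0:ℝ) ≤ (k:ℝ) := Nat.cast_nonneg k
    have hmc : (0:ℝ) ≤ ((n-k:ℕ):ℝ) := Nat.cast_nonneg _
    rcases le_total k (n - k) with hc | hc
    · have hc' : (k:ℝ) ≤ ((n-k:ℕ):ℝ) := by exact_mod_cast hc
      have h1 : gγ/(gα*gβ) ≤ 2/gα := by
        rw [div_le_div_iff₀ (by positivity) hgα0, hgγ, hgα, hgβ, hncast]
        exact aux_g1 _ _ hkc hc'
      calc (gγ/(gα*gβ))^(s*p') ≤ (2/gα)^(s*p') :=
            Real.rpow_le_rpow (by positivity) h1 hσ0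
        _ = 2^(s*p') * gα^(-(s*p')) := by
            rw [Real.div_rpow (by norm_num) hgα0.le, Real.rpow_neg hgα0.le, div_eq_mul_inv]
        _ ≤ _ := by
            refine mul_le_mul_of_nonneg_left ?_ (Real.rpow_nonneg (by norm_num) _)
            exact le_add_of_nonneg_right (Real.rpow_nonneg hgβ0.le _)
    · have hc' : ((n-k:ℕ):ℝ) ≤ (k:ℝ) := by exact_mod_cast hc
      have h1 : gγ/(gα*gβ) ≤ 2/gβ := by
        rw [div_le_div_iff₀ (by positivity) hgβ0, hgγ, hgα, hgβ, hncast]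
        exact aux_g2 _ _ hmc hc'
      calc (gγ/(gα*gβ))^(s*p') ≤ (2/gβ)^(s*p') :=
            Real.rpow_le_rpow (by positivity) h1 hσ0
        _ = 2^(s*p') * gβ^(-(s*p')) := by
            rw [Real.div_rpow (by norm_num) hgβ0.le, Real.rpow_neg hgβ0.le, div_eq_mul_inv]
        _ ≤ _ := by
            refine mul_le_mul_of_nonneg_left ?_ (Real.rpow_nonneg (by norm_num) _)
            exact le_add_of_nonneg_left (Real.rpow_nonneg hgα0.le _)
  calc (PcR / CnkR) ^ (t * p') * (gγ/(gα*gβ)) ^ (s * p')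
      ≤ (PcR / CnkR) * ((2:ℝ)^(s*p') * (gα^(-(s*p')) + gβ^(-(s*p')))) := by
        apply mul_le_mul b1 b2 (Real.rpow_nonneg (by positivity) _) hRpos.le
    _ = _ := by rw [hgα, hgβ]

/-- Lemma 8.2 key estimate: for the weight `w_α = (α!/|α|!)^t (|α|+1)^s` with
`s > 1/p'`, `t ≥ 1/p'`, the sums `∑_{α+β=γ} (w_γ/(w_α w_β))^{p'}` are uniformly
bounded in `γ`. -/
theorem drury_arveson_algebra_estimate (N : ℕ) (p' s t : ℝ)
    (hp' : 1 < p') (hs : 1 / p' < s) (ht : 1 / p' ≤ t) :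
    ∃ C : ℝ, ∀ γ : Fin N → ℕ,
      ∑ α ∈ Finset.Iic γ,
        (daWeight N s t γ / (daWeight N s t α * daWeight N s t (γ - α))) ^ p' ≤ C := by
  have hp0 : (0:ℝ) < p' := lt_trans one_pos hp'
  have hσ : 1 < s * p' := by
    rw [div_lt_iff₀ hp0] at hs; linarith
  have hτ : 1 ≤ t * p' := by
    rw [div_le_iff₀ hp0] at ht; linarith
  have hσ0 : (0:ℝ) ≤ s * p' := by linarith
  have hsum : Summable (fun j : ℕ => ((j:ℝ)+1) ^ (-(s*p'))) := by
    have h := Real.summable_nat_rpow.2 (by linarith : -(s*p') < -1)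
    have h2 := (summable_nat_add_iff 1).2 h
    refine h2.congr fun n => ?_
    push_cast
    ring_nf
  set Z := ∑' j : ℕ, ((j:ℝ)+1) ^ (-(s*p')) with hZ
  refine ⟨(2:ℝ)^(s*p') * (2*Z), ?_⟩
  intro γ
  set n := ∑ i, γ i with hn
  rw [← Finset.sum_fiberwise_of_maps_to (g := fun α => ∑ i, α i) (t := Finset.range (n+1))
      (fun α hα => by
        rw [Finset.mem_range, Nat.lt_succ_iff, hn]
        exact Finset.sum_le_sum fun i _ => (Finset.mem_Iic.mp hα) i)]
  have key : ∀ k ∈ Finset.range (n+1),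
      (∑ α ∈ (Finset.Iic γ).filter (fun α => ∑ i, α i = k),
        (daWeight N s t γ / (daWeight N s t α * daWeight N s t (γ - α))) ^ p')
      ≤ (2:ℝ)^(s*p') * ((((k:ℝ))+1)^(-(s*p')) + (((n - k : ℕ):ℝ)+1)^(-(s*p'))) := by
    intro k hk
    have hkn : k ≤ n := Nat.lt_succ_iff.mp (Finset.mem_range.mp hk)
    have hCnk0 : (0:ℝ) < ((n.choose k : ℕ) : ℝ) := by
      exact_mod_cast Nat.choose_pos hkn
    have step1 : (∑ α ∈ (Finset.Iic γ).filter (fun α => ∑ i, α i = k),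
          (daWeight N s t γ / (daWeight N s t α * daWeight N s t (γ - α))) ^ p')
        ≤ ∑ α ∈ (Finset.Iic γ).filter (fun α => ∑ i, α i = k),
            ((∏ i, (γ i).choose (α i) : ℕ) : ℝ) / ((n.choose k : ℕ) : ℝ) *
              ((2:ℝ)^(s*p') * ((((k:ℝ))+1)^(-(s*p')) + (((n - k : ℕ):ℝ)+1)^(-(s*p')))) := by
      refine Finset.sum_le_sum fun α hα => ?_
      rw [Finset.mem_filter] at hα
      exact term_bound N p' s t hp0 hτ hσ0 γ α k hα.1 hα.2 hkn
    refine le_trans step1 ?_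
    rw [← Finset.sum_mul, ← Finset.sum_div]
    have hsumPc : (∑ α ∈ (Finset.Iic γ).filter (fun α => ∑ i, α i = k),
        ((∏ i, (γ i).choose (α i) : ℕ) : ℝ)) = ((n.choose k : ℕ) : ℝ) := by
      rw [← Nat.cast_sum]
      congr 1
      rw [Finset.sum_filter]
      exact vand γ k
    rw [hsumPc, div_self hCnk0.ne']
    rw [one_mul]
  calc _ ≤ ∑ k ∈ Finset.range (n+1),
        (2:ℝ)^(s*p') * ((((k:ℝ))+1)^(-(s*p')) + (((n - k : ℕ):ℝ)+1)^(-(s*p'))) :=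
        Finset.sum_le_sum key
    _ ≤ (2:ℝ)^(s*p') * (2*Z) := by
        rw [← Finset.mul_sum]
        refine mul_le_mul_of_nonneg_left ?_ (Real.rpow_nonneg (by norm_num) _)
        rw [Finset.sum_add_distrib]
        have hrefl : ∑ k ∈ Finset.range (n+1), (((n - k : ℕ):ℝ)+1)^(-(s*p'))
            = ∑ k ∈ Finset.range (n+1), (((k:ℕ):ℝ)+1)^(-(s*p')) := by
          have h := Finset.sum_range_reflect (fun j => (((j:ℕ):ℝ)+1)^(-(s*p'))) (n+1)
          simpa using h
        rw [hrefl]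
        have hle : ∑ k ∈ Finset.range (n+1), (((k:ℕ):ℝ)+1)^(-(s*p')) ≤ Z :=
          Summable.sum_le_tsum _ (fun i _ => Real.rpow_nonneg (by positivity) _) hsum
        linarith
end
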